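/- arXiv:1912.06019 — 3 statements merged into one kernel-verified Lean document; each statement's English description precedes it below -/
import Mathlib

section
/- Key step of Theorem 1: existence of a Lyapunov solution strictly between 0 and I. Let A be a real d×d matrix and c > 0 a real number, and assume Aᵀ + A + c·I is negative definite (equivalently, with ρ the maximum real part of the eigenvalues of A and β = λ_max(Aᵀ + A)/(2ρ), assume ρ < −c/(2β)). Then there exists a real symmetric matrix P with 0 ≺ P ≺ I satisfying the Lyapunov equation AᵀP + PA + c·I = 0. -/
/-!
Write `L X = Aᵀ X + X A`. Pairing `L X` with `X` and `L Xᵀ` with `Xᵀ` in the trace form gives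
`tr (Xᵀ (Aᵀ + A) X) + tr (X (Aᵀ + A) Xᵀ)`, which is negative for `X ≠ 0` once `Aᵀ + A ≺ 0`; so `L`
is injective, hence invertible, and since `L` commutes with transposition the solution of
`L P = -c I` is symmetric. If `P v = μ v` then `vᵀ (L P) v = μ · vᵀ (Aᵀ + A) v`, so a symmetric `P`
with `L P ≺ 0` has only positive eigenvalues. This applies to `P` and to `I - P`, because
`L (I - P) = Aᵀ + A + c I ≺ 0`.
-/

open Matrix

variable {n : Type*} [Fintype n]

theorem Matrix.trace_mul_mul_transpose {α : Type*} [NonUnitalSemiring α] (X M : Matrix n n α) :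
    trace (X * M * Xᵀ) = ∑ i, X i ⬝ᵥ (M *ᵥ X i) := by
  simp [trace, mul_mul_apply]

theorem Matrix.PosDef.trace_mul_mul_transpose_pos {M : Matrix n n ℝ} (hM : M.PosDef)
    {X : Matrix n n ℝ} (hX : X ≠ 0) : 0 < trace (X * M * Xᵀ) := by
  obtain ⟨i, hi⟩ : ∃ i, X i ≠ 0 := by
    by_contra! h
    exact hX (funext h)
  rw [trace_mul_mul_transpose]
  exact Finset.sum_pos' (fun j _ => by simpa using hM.posSemidef.dotProduct_mulVec_nonneg (X j))
    ⟨i, Finset.mem_univ i, by simpa using hM.dotProduct_mulVec_pos hi⟩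

def lyapunovMap (A : Matrix n n ℝ) : Matrix n n ℝ →ₗ[ℝ] Matrix n n ℝ :=
  LinearMap.mulLeft ℝ Aᵀ + LinearMap.mulRight ℝ A

namespace lyapunovMap

variable (A : Matrix n n ℝ)

@[simp]
theorem apply (X : Matrix n n ℝ) : lyapunovMap A X = Aᵀ * X + X * A := rfl

theorem transpose_apply (X : Matrix n n ℝ) : lyapunovMap A Xᵀ = (lyapunovMap A X)ᵀ := by
  simp only [apply, transpose_add, transpose_mul, transpose_transpose, add_comm]

theorem one_apply [DecidableEq n] : lyapunovMap A 1 = Aᵀ + A := by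
  simp

theorem trace_transpose_mul_add_trace_mul (X : Matrix n n ℝ) :
    trace (Xᵀ * lyapunovMap A X) + trace (X * lyapunovMap A Xᵀ) =
      trace (Xᵀ * (Aᵀ + A) * X) + trace (X * (Aᵀ + A) * Xᵀ) := by
  simp only [apply, mul_add, add_mul, trace_add, ← Matrix.mul_assoc]
  rw [trace_mul_cycle X A Xᵀ, trace_mul_cycle Xᵀ A X]
  ring

theorem dotProduct_mulVec_of_mulVec_eq_smul {P : Matrix n n ℝ} (hP : P.IsSymm) {μ : ℝ}
    {v : n → ℝ} (hv : P *ᵥ v = μ • v) :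
    v ⬝ᵥ (lyapunovMap A P *ᵥ v) = μ * (v ⬝ᵥ ((Aᵀ + A) *ᵥ v)) := by
  rw [apply, add_mulVec, dotProduct_add, add_mulVec, dotProduct_add, ← mulVec_mulVec,
    ← mulVec_mulVec, hv, mulVec_smul, dotProduct_smul, dotProduct_mulVec v P, ← hP.eq,
    vecMul_transpose, hv, smul_dotProduct]
  simp only [smul_eq_mul]
  ring

variable {A}

theorem injective (hA : (-(Aᵀ + A)).PosDef) : Function.Injective (lyapunovMap A) := by
  rw [← LinearMap.ker_eq_bot, LinearMap.ker_eq_bot']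
  intro X hX
  by_contra hX0
  have hXt : lyapunovMap A Xᵀ = 0 := by rw [transpose_apply, hX, transpose_zero]
  have hsum := trace_transpose_mul_add_trace_mul A X
  rw [hX, hXt, Matrix.mul_zero, Matrix.mul_zero, trace_zero, add_zero] at hsum
  have hpos := hA.trace_mul_mul_transpose_pos hX0
  have hnonneg := (hA.posSemidef.mul_mul_conjTranspose_same Xᵀ).trace_nonneg
  simp only [conjTranspose_eq_transpose_of_trivial, transpose_transpose, Matrix.mul_neg,
    Matrix.neg_mul, trace_neg] at hpos hnonneg
  linarith

theorem posDef_of_posDef_neg [DecidableEq n] (hA : (-(Aᵀ + A)).PosSemidef)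
    {P : Matrix n n ℝ} (hP : P.IsSymm) (hL : (-lyapunovMap A P).PosDef) : P.PosDef := by
  have hPH : P.IsHermitian := isHermitian_iff_isSymm.mpr hP
  refine hPH.posDef_iff_eigenvalues_pos.mpr fun i => ?_
  set v : n → ℝ := ⇑(hPH.eigenvectorBasis i)
  have hv : v ≠ 0 := fun h =>
    hPH.eigenvectorBasis.orthonormal.ne_zero i (by ext j; exact congrFun h j)
  have hform := dotProduct_mulVec_of_mulVec_eq_smul A hP (hPH.mulVec_eigenvectorBasis i)
  have hμ : 0 < hPH.eigenvalues i * (v ⬝ᵥ (-(Aᵀ + A) *ᵥ v)) := by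
    have hpos := hL.dotProduct_mulVec_pos hv
    rw [star_trivial, neg_mulVec, dotProduct_neg, hform] at hpos
    rwa [neg_mulVec, dotProduct_neg, mul_neg]
  exact pos_of_mul_pos_left hμ (by simpa using hA.dotProduct_mulVec_nonneg v)

end lyapunovMap

theorem lyapunov_solution_between_zero_and_one_general
    {d : ℕ}
    (A : Matrix (Fin d) (Fin d) ℝ)
    (c : ℝ) (hc : 0 < c)
    (hND : (-(Aᵀ + A + c • (1 : Matrix (Fin d) (Fin d) ℝ))).PosDef) :
    ∃ P : Matrix (Fin d) (Fin d) ℝ,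
      Pᵀ = P ∧ P.PosDef ∧ ((1 : Matrix (Fin d) (Fin d) ℝ) - P).PosDef ∧
      Aᵀ * P + P * A + c • (1 : Matrix (Fin d) (Fin d) ℝ) = 0 := by
  have hcI : (c • (1 : Matrix (Fin d) (Fin d) ℝ)).PosDef := PosDef.one.smul hc
  have hA : (-(Aᵀ + A)).PosDef := by simpa using hND.add hcI
  have hinj := lyapunovMap.injective hA
  obtain ⟨P, hP⟩ := LinearMap.injective_iff_surjective.mp hinj (-(c • 1))
  have hPsymm : P.IsSymm := hinj (by simp only [lyapunovMap.transpose_apply, hP, transpose_neg,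
    transpose_smul, transpose_one])
  refine ⟨P, hPsymm, lyapunovMap.posDef_of_posDef_neg hA.posSemidef hPsymm ?_,
    lyapunovMap.posDef_of_posDef_neg hA.posSemidef (isSymm_one.sub hPsymm) ?_, ?_⟩
  · rwa [hP, neg_neg]
  · rwa [map_sub, lyapunovMap.one_apply, hP, sub_neg_eq_add]
  · rw [← lyapunovMap.apply, hP, neg_add_cancel]

/-- Key step of Theorem 1: existence of a Lyapunov solution strictly between 0 and I. -/
theorem lyapunov_solution_between_zero_and_one
    {d : ℕ} (hd : 1 ≤ d)
    (A : Matrix (Fin d) (Fin d) ℝ)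
    (c : ℝ) (hc : 0 < c)
    (hND : (-(Aᵀ + A + c • (1 : Matrix (Fin d) (Fin d) ℝ))).PosDef) :
    ∃ P : Matrix (Fin d) (Fin d) ℝ,
      Pᵀ = P ∧ P.PosDef ∧ ((1 : Matrix (Fin d) (Fin d) ℝ) - P).PosDef ∧
      Aᵀ * P + P * A + c • (1 : Matrix (Fin d) (Fin d) ℝ) = 0 :=
  lyapunov_solution_between_zero_and_one_general A c hc hND
end

section
/- Greedy contraction estimate underlying Proposition 1. Let Ω be a finite ground set, f : 2^Ω → ℝ a nonincreasing set function, and let s_1, …, s_m ∈ Ω be distinct elements (m ≥ 1) with S = {s_1, …, s_m} and prefixes W_n = {s_1, …, s_n} (so W_0 = ∅ and W_m = S). Let γ be a real number with 0 ≤ γ ≤ m. Assume: (greedy rule) for every 0 ≤ n < m and every l ∈ S, f(W_{n+1}) ≤ f(W_n ∪ {l}); and (submodularity-ratio bound) for every 0 ≤ n < m, ∑_{l∈S} (f(W_n) − f(W_n ∪ {l})) ≥ γ · (f(W_n) − f(S)). Then for every 0 ≤ n ≤ m: f(W_n) − f(S) ≤ (1 − γ/m)ⁿ · (f(∅) − f(S)).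 -/
/-!
Each of the `m` terms of the submodularity-ratio sum at `W n` is a one-element decrement, which
by the greedy rule is at most the decrement `f (W n) - f (W (n + 1))` actually achieved. Hence
`γ (f (W n) - f S) ≤ m (f (W n) - f (W (n + 1)))`: the gap `f (W n) - f S` contracts by the factor
`1 - γ / m` at every step, and the estimate follows by iterating this contraction.
-/

open Finset

lemma sum_sub_insert_le_card_mul {α : Type*} [DecidableEq α] (f : Finset α → ℝ)
    {S A B : Finset α} (h : ∀ l ∈ S, f B ≤ f (insert l A)) :
    ∑ l ∈ S, (f A - f (insert l A)) ≤ #S * (f A - f B) :=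
  calc ∑ l ∈ S, (f A - f (insert l A)) ≤ ∑ _l ∈ S, (f A - f B) :=
        sum_le_sum fun l hl => sub_le_sub_left (h l hl) _
    _ = #S * (f A - f B) := by rw [sum_const, nsmul_eq_mul]

lemma le_one_sub_div_mul_of_mul_le_mul_sub {m γ a b : ℝ} (hm : 0 < m)
    (h : γ * a ≤ m * (a - b)) : b ≤ (1 - γ / m) * a := by
  rw [one_sub_div hm.ne', div_mul_eq_mul_div, le_div_iff₀ hm]
  linarith

theorem greedy_contraction_estimate_general
    {Ω : Type} [DecidableEq Ω]
    (f : Finset Ω → ℝ)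
    (m : ℕ)
    (s : ℕ → Ω) (hinj : ∀ i < m, ∀ j < m, s i = s j → i = j)
    (W : ℕ → Finset Ω) (hW : ∀ n, W n = (Finset.range n).image s)
    (S : Finset Ω) (hS : S = W m)
    (γ : ℝ) (hγm : γ ≤ (m : ℝ))
    (hgreedy : ∀ n < m, ∀ l ∈ S, f (W (n + 1)) ≤ f (insert l (W n)))
    (hratio : ∀ n < m,
      γ * (f (W n) - f S) ≤ ∑ l ∈ S, (f (W n) - f (insert l (W n)))) :
    ∀ n ≤ m, f (W n) - f S ≤ (1 - γ / m) ^ n * (f ∅ - f S) := by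
  have hcard : #S = m := by
    rw [hS, hW, card_image_of_injOn, card_range]
    intro i hi j hj
    exact hinj i (mem_range.mp hi) j (mem_range.mp hj)
  have hfactor : 0 ≤ 1 - γ / m := sub_nonneg.2 (div_le_one_of_le₀ hγm m.cast_nonneg)
  intro n hn
  rw [← show W 0 = ∅ by simp [hW]]
  refine le_geom (u := fun k => f (W k) - f S) hfactor n fun k hk => ?_
  have hkm : k < m := hk.trans_le hn
  refine le_one_sub_div_mul_of_mul_le_mul_sub (Nat.cast_pos.2 (k.zero_le.trans_lt hkm)) ?_
  calc γ * (f (W k) - f S) ≤ ∑ l ∈ S, (f (W k) - f (insert l (W k))) := hratio k hkm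
    _ ≤ #S * (f (W k) - f (W (k + 1))) := sum_sub_insert_le_card_mul f (hgreedy k hkm)
    _ = m * ((f (W k) - f S) - (f (W (k + 1)) - f S)) := by rw [hcard]; ring

/-- Greedy contraction estimate underlying Proposition 1. -/
theorem greedy_contraction_estimate
    {Ω : Type} [Fintype Ω] [DecidableEq Ω]
    (f : Finset Ω → ℝ)
    (hmono : ∀ W T : Finset Ω, W ⊆ T → f T ≤ f W)
    (m : ℕ) (hm : 1 ≤ m)
    (s : ℕ → Ω) (hinj : ∀ i < m, ∀ j < m, s i = s j → i = j)
    (W : ℕ → Finset Ω) (hW : ∀ n, W n = (Finset.range n).image s)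
    (S : Finset Ω) (hS : S = W m)
    (γ : ℝ) (hγ0 : 0 ≤ γ) (hγm : γ ≤ (m : ℝ))
    (hgreedy : ∀ n < m, ∀ l ∈ S, f (W (n + 1)) ≤ f (insert l (W n)))
    (hratio : ∀ n < m,
      γ * (f (W n) - f S) ≤ ∑ l ∈ S, (f (W n) - f (insert l (W n)))) :
    ∀ n ≤ m, f (W n) - f S ≤ (1 - γ / m) ^ n * (f ∅ - f S) :=
  greedy_contraction_estimate_general f m s hinj W hW S hS γ hγm hgreedy hratio
end

section
/- Proposition 1 (provable optimality bound of the greedy leader-selection algorithm). Let Ω be a finite ground set, f : 2^Ω → ℝ a nonincreasing set function, and let s_1, …, s_m ∈ Ω be distinct elements (m ≥ 2) with S = {s_1, …, s_m} and prefixes W_n = {s_1, …, s_n} (W_0 = ∅, W_m = S). Let γ be a real number with 0 < γ ≤ m and assume: (greedy rule) for every 0 ≤ n < m and every l ∈ S, f(W_{n+1}) ≤ f(W_n ∪ {l}); (submodularity-ratio bound) for every 0 ≤ n < m, ∑_{l∈S} (f(W_n) − f(W_n ∪ {l})) ≥ γ · (f(W_n) − f(S)); and (termination) f(S) = 0. Then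 for all integers k_min, s*, k with 1 ≤ k_min ≤ s* ≤ m − 1 and m ≤ k, one has f(W_{m−1}) ≤ e^{−(k_min/k)·γ} · f(∅). -/
/-!
Because the greedy choice `W (n+1)` beats every single-element extension of `W n`, the
submodularity-ratio inequality at `W n` bounds `γ · f (W n)` by `m · (f (W n) - f (W (n+1)))`.
Each greedy step therefore shrinks `f` by the factor `1 - γ/m`, so
`f (W (m-1)) ≤ (1 - γ/m)^(m-1) f ∅ ≤ exp (-((m-1)/m) γ) f ∅`, and `kmin/k ≤ (m-1)/m`.
-/

open Finset

lemma le_one_sub_div_card_mul {ι : Type*} {S : Finset ι} (hS : S.Nonempty) {g : ι → ℝ}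
    {x y γ : ℝ} (hy : ∀ l ∈ S, y ≤ g l) (h : γ * x ≤ ∑ l ∈ S, (x - g l)) :
    y ≤ (1 - γ / #S) * x := by
  have hcard : (0 : ℝ) < #S := by exact_mod_cast hS.card_pos
  have hsum : ∑ l ∈ S, (x - g l) ≤ #S * (x - y) := by
    simpa [mul_sub] using Finset.sum_le_sum fun l hl => sub_le_sub_left (hy l hl) x
  rw [one_sub_div hcard.ne', div_mul_eq_mul_div, le_div_iff₀ hcard]
  linarith

lemma one_sub_div_pow_le_exp_neg_mul {m : ℕ} {t : ℝ} (ht : t ≤ m) (n : ℕ) :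
    (1 - t / m) ^ n ≤ Real.exp (-((n / m) * t)) :=
  calc (1 - t / m) ^ n ≤ Real.exp (-(t / m)) ^ n :=
        pow_le_pow_left₀ (sub_nonneg.2 (div_le_one_of_le₀ ht m.cast_nonneg))
          (Real.one_sub_le_exp_neg _) n
    _ = Real.exp (-((n / m) * t)) := by rw [← Real.exp_nat_mul]; ring_nf

theorem proposition1_optimality_bound_general
    {Ω : Type} [DecidableEq Ω]
    (f : Finset Ω → ℝ)
    (hmono : ∀ W T : Finset Ω, W ⊆ T → f T ≤ f W)
    (m : ℕ)
    (s : ℕ → Ω) (hinj : ∀ i < m, ∀ j < m, s i = s j → i = j)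
    (W : ℕ → Finset Ω) (hW : ∀ n, W n = (Finset.range n).image s)
    (S : Finset Ω) (hS : S = W m)
    (γ : ℝ) (hγ0 : 0 < γ) (hγm : γ ≤ (m : ℝ))
    (hgreedy : ∀ n < m, ∀ l ∈ S, f (W (n + 1)) ≤ f (insert l (W n)))
    (hratio : ∀ n < m,
      γ * (f (W n) - f S) ≤ ∑ l ∈ S, (f (W n) - f (insert l (W n))))
    (hterm : f S = 0) :
    ∀ kmin sstar k : ℕ, 1 ≤ kmin → kmin ≤ sstar → sstar ≤ m - 1 → m ≤ k →
      f (W (m - 1)) ≤ Real.exp (-((kmin : ℝ) / (k : ℝ)) * γ) * f ∅ := by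
  intro kmin sstar k hk1 hks hsm hmk
  have hcard : #S = m := by
    rw [hS, hW, card_image_of_injOn fun i hi j hj => hinj i (mem_range.1 hi) j (mem_range.1 hj),
      card_range]
  have hm : (0 : ℝ) < m := by exact_mod_cast (show 0 < m by omega)
  have hstep : ∀ n < m, f (W (n + 1)) ≤ (1 - γ / m) * f (W n) := fun n hn => by
    simpa [hcard] using le_one_sub_div_card_mul (card_pos.1 (by omega)) (hgreedy n hn)
      (by simpa [hterm] using hratio n hn)
  have hgeom := le_geom (u := fun n => f (W n))
    (sub_nonneg.2 (div_le_one_of_le₀ hγm m.cast_nonneg)) (m - 1) fun n hn => hstep n (by omega)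
  have hrate : (kmin : ℝ) / k ≤ ((m - 1 : ℕ) : ℝ) / m :=
    div_le_div₀ (Nat.cast_nonneg _) (by exact_mod_cast hks.trans hsm) hm (by exact_mod_cast hmk)
  have hW0 : W 0 = ∅ := by simp [hW]
  have hf0 : 0 ≤ f ∅ := hterm ▸ hmono ∅ S (empty_subset S)
  calc f (W (m - 1)) ≤ (1 - γ / m) ^ (m - 1) * f (W 0) := hgeom
    _ ≤ Real.exp (-((((m - 1 : ℕ) : ℝ) / m) * γ)) * f ∅ := by
        rw [hW0]; gcongr; exact one_sub_div_pow_le_exp_neg_mul hγm _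
    _ ≤ Real.exp (-((kmin : ℝ) / k) * γ) * f ∅ := by
        rw [neg_mul]; gcongr

/-- Proposition 1 (provable optimality bound of the greedy leader-selection
algorithm). -/
theorem proposition1_optimality_bound
    {Ω : Type} [Fintype Ω] [DecidableEq Ω]
    (f : Finset Ω → ℝ)
    (hmono : ∀ W T : Finset Ω, W ⊆ T → f T ≤ f W)
    (m : ℕ) (hm : 2 ≤ m)
    (s : ℕ → Ω) (hinj : ∀ i < m, ∀ j < m, s i = s j → i = j)
    (W : ℕ → Finset Ω) (hW : ∀ n, W n = (Finset.range n).image s)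
    (S : Finset Ω) (hS : S = W m)
    (γ : ℝ) (hγ0 : 0 < γ) (hγm : γ ≤ (m : ℝ))
    (hgreedy : ∀ n < m, ∀ l ∈ S, f (W (n + 1)) ≤ f (insert l (W n)))
    (hratio : ∀ n < m,
      γ * (f (W n) - f S) ≤ ∑ l ∈ S, (f (W n) - f (insert l (W n))))
    (hterm : f S = 0) :
    ∀ kmin sstar k : ℕ, 1 ≤ kmin → kmin ≤ sstar → sstar ≤ m - 1 → m ≤ k →
      f (W (m - 1)) ≤ Real.exp (-((kmin : ℝ) / (k : ℝ)) * γ) * f ∅ :=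
  proposition1_optimality_bound_general f hmono m s hinj W hW S hS γ hγ0 hγm hgreedy hratio hterm
end
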